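/- arXiv:2209.13198 — 2 statements merged into one kernel-verified Lean document; each statement's English description precedes it below -/
import Mathlib

section
/- Let S be a generalized inverse of Ṽ. Then the following four conditions are equivalent: (1) ker(I_{E^{⊗m}} ⊗ S) ⊆ ran(S^(m)) for every m ≥ 1; (2) ker(I_E ⊗ S^(n)) ⊆ ran(S) for every n ≥ 1; (3) ker(I_{E^{⊗m}} ⊗ S^(n)) ⊆ ran(S^(m)) for all n, m ≥ 1; (4) ker(I_{E^{⊗m}} ⊗ S^(n)) = S^(m)(ker S^(m+n)) for all n, m ≥ 1. -/
open scoped InnerProductSpace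

noncomputable section

variable (H : Type) [NormedAddCommGroup H] [InnerProductSpace ℂ H]

/-- Words of length `n` in the alphabet `{1,…,d}`. -/
abbrev Word (d n : ℕ) := Fin n → Fin d

/-- `H_n`: the ℓ²-direct sum of copies of `H` indexed by words of length `n`. -/
abbrev Hn (d n : ℕ) := PiLp 2 (fun _ : Word d n => H)

instance instHnCompleteSpace [CompleteSpace H] (d n : ℕ) : CompleteSpace (Hn H d n) :=
  ((PiLp.continuousLinearEquiv 2 ℂ (fun _ : Word d n => H)).isUniformEmbedding.completeSpace_congr
    (PiLp.continuousLinearEquiv 2 ℂ (fun _ : Word d n => H)).surjective).mpr inferInstance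

/-- The coordinate projection `H_m → H` at the word `α`. -/
def coord (d m : ℕ) (α : Word d m) : Hn H d m →L[ℂ] H :=
  PiLp.proj 2 (fun _ : Word d m => H) α

/-- The embedding `H → H_n` into the coordinate at the word `α`. -/
def singleCLM (d n : ℕ) (α : Word d n) : H →L[ℂ] Hn H d n :=
  ((PiLp.continuousLinearEquiv 2 ℂ (fun _ : Word d n => H)).symm.toContinuousLinearMap).comp
    (ContinuousLinearMap.pi (fun β : Word d n =>
      if β = α then ContinuousLinearMap.id ℂ H else 0))

/-- `V_α := V_{α_1} ∘ ⋯ ∘ V_{α_n}` for a word `α`. -/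
def Vword {d : ℕ} (V : Fin d → H →L[ℂ] H) : (n : ℕ) → Word d n → (H →L[ℂ] H)
  | 0, _ => ContinuousLinearMap.id ℂ H
  | (n + 1), α => (V (α 0)).comp (Vword V n (fun i => α i.succ))

/-- `Ṽ_n : H_n → H`, `Ṽ_n((h_α)_α) = Σ_α V_α h_α`. -/
def Vtilde {d : ℕ} (V : Fin d → H →L[ℂ] H) (n : ℕ) : Hn H d n →L[ℂ] H :=
  ∑ α : Word d n, (Vword H V n α).comp (coord H d n α)

/-- Extraction of the `α`-block: `H_{n+j} → H_j`. -/
def blockIn (d n j : ℕ) (α : Word d n) : Hn H d (n + j) →L[ℂ] Hn H d j :=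
  ((PiLp.continuousLinearEquiv 2 ℂ (fun _ : Word d j => H)).symm.toContinuousLinearMap).comp
    (ContinuousLinearMap.pi (fun γ : Word d j => coord H d (n + j) (Fin.append α γ)))

/-- Insertion of the `α`-block: `H_k → H_{n+k}`. -/
def blockOut (d n k : ℕ) (α : Word d n) : Hn H d k →L[ℂ] Hn H d (n + k) :=
  ((PiLp.continuousLinearEquiv 2 ℂ (fun _ : Word d (n + k) => H)).symm.toContinuousLinearMap).comp
    (ContinuousLinearMap.pi (fun β : Word d (n + k) =>
      if (fun i : Fin n => β (Fin.castAdd k i)) = α then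
        coord H d k (fun i : Fin k => β (Fin.natAdd n i)) else 0))

/-- The amplification `I_{E^{⊗n}} ⊗ R : H_{n+j} → H_n` of a map `R : H_j → H`. -/
def ampV (d n j : ℕ) (R : Hn H d j →L[ℂ] H) : Hn H d (n + j) →L[ℂ] Hn H d n :=
  ∑ α : Word d n, (singleCLM H d n α).comp (R.comp (blockIn H d n j α))

/-- The amplification `I_{E^{⊗n}} ⊗ S : H_n → H_{n+k}` of a map `S : H → H_k`. -/
def ampS (d n k : ℕ) (S : H →L[ℂ] Hn H d k) : Hn H d n →L[ℂ] Hn H d (n + k) :=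
  ∑ α : Word d n, (blockOut H d n k α).comp (S.comp (coord H d n α))

/-- The amplification `I_{E^{⊗n}} ⊗ T : H_n → H_n` of a map `T : H → H`. -/
def ampHH (d n : ℕ) (T : H →L[ℂ] H) : Hn H d n →L[ℂ] Hn H d n :=
  ∑ α : Word d n, (singleCLM H d n α).comp (T.comp (coord H d n α))

/-- The amplification `I_{E^{⊗n}} ⊗ R : H_{n+j} → H_{n+k}` of a map `R : H_j → H_k`. -/
def ampGen (d n j k : ℕ) (R : Hn H d j →L[ℂ] Hn H d k) :
    Hn H d (n + j) →L[ℂ] Hn H d (n + k) :=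
  ∑ α : Word d n, (blockOut H d n k α).comp (R.comp (blockIn H d n j α))

/-- The iterates `S^{(n)} : H → H_n` of a map `S : H → H_1`:
`S^{(0)} = I_H` and `S^{(n+1)} = (I_{E^{⊗n}} ⊗ S) ∘ S^{(n)}`. -/
def Siter {d : ℕ} (S : H →L[ℂ] Hn H d 1) : (n : ℕ) → (H →L[ℂ] Hn H d n)
  | 0 => singleCLM H d 0 (fun i => i.elim0)
  | (n + 1) => (ampS H d n 1 S).comp (Siter S n)

/-- The generalized range `R^∞(V) = ⋂_{n ≥ 1} ran Ṽ_n`. -/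
def Rinf {d : ℕ} (V : Fin d → H →L[ℂ] H) : Submodule ℂ H :=
  ⨅ (n : ℕ) (_ : 1 ≤ n), LinearMap.range (Vtilde H V n).toLinearMap

/-- `H_n(K)`: families all of whose entries lie in `K` (realizing `E^{⊗n} ⊗ K`). -/
def HnSub (d n : ℕ) (K : Submodule ℂ H) : Submodule ℂ (Hn H d n) :=
  ⨅ α : Word d n, K.comap (coord H d n α).toLinearMap

/-- The representation is regular: `ran Ṽ` is closed and
`ker Ṽ_n ⊆ ran (I_{E^{⊗n}} ⊗ Ṽ_m)` for all `n, m ≥ 1`. -/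
def RepRegular {d : ℕ} (V : Fin d → H →L[ℂ] H) : Prop :=
  IsClosed (LinearMap.range (Vtilde H V 1).toLinearMap : Set H) ∧
    ∀ n m : ℕ, 1 ≤ n → 1 ≤ m →
      LinearMap.ker (Vtilde H V n).toLinearMap ≤ LinearMap.range (ampV H d n m (Vtilde H V m)).toLinearMap

/-- The reduced minimum modulus `γ(T)`. -/
def rmm {X Y : Type*} [NormedAddCommGroup X] [InnerProductSpace ℂ X]
    [NormedAddCommGroup Y] [InnerProductSpace ℂ Y] (T : X →L[ℂ] Y) : ℝ :=
  sInf ((fun ξ => ‖T ξ‖ / Metric.infDist ξ (LinearMap.ker T.toLinearMap : Set X)) ''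
    {ξ : X | ξ ∉ LinearMap.ker T.toLinearMap})

/-- The cast `H_m → H_k` along an equality `m = k` of word lengths. -/
def castHn (d : ℕ) {m k : ℕ} (h : m = k) : Hn H d m →L[ℂ] Hn H d k := by
  subst h; exact ContinuousLinearMap.id ℂ _

/-- `E^{⊗j} ⊙ K ⊆ H_{j+1}`: families all of whose `1`-blocks lie in `K ⊆ H_1`. -/
def odotSub (d j : ℕ) (K : Submodule ℂ (Hn H d 1)) : Submodule ℂ (Hn H d (j + 1)) :=
  ⨅ α : Word d j, K.comap (blockIn H d j 1 α).toLinearMap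

end

/-! The iterates satisfy the cocycle identity `S^(m+n) = (I_{E^{⊗m}} ⊗ S^(n)) ∘ S^(m)`.
Hence `S^(m)(ker S^(m+n)) = ran S^(m) ∩ ker (I_{E^{⊗m}} ⊗ S^(n))`, which is (3) ⇔ (4).
Conditions (1) and (2) are the cases `n = 1` and `m = 1` of (3). Conversely, (1) gives (3) by
induction on `n`, splitting off the last factor `S` of `S^(n+1)`; (2) gives (3) by induction
on `m`, solving `S y_α = x_α` blockwise via (2) and lifting `y` through `S^(m)` by the
induction hypothesis. -/

section Amplification

variable {H : Type} [NormedAddCommGroup H] [InnerProductSpace ℂ H] {d : ℕ}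

lemma blockIn_apply {n k : ℕ} (α : Word d n) (x : Hn H d (n + k)) (γ : Word d k) :
    blockIn H d n k α x γ = x (Fin.append α γ) := rfl

lemma blockOut_apply {n k : ℕ} (α : Word d n) (z : Hn H d k) (β : Word d (n + k)) :
    blockOut H d n k α z β =
      if (fun i : Fin n => β (Fin.castAdd k i)) = α then
        z fun i => β (Fin.natAdd n i) else 0 := by
  change (if (fun i : Fin n => β (Fin.castAdd k i)) = α then
      coord H d k (fun i => β (Fin.natAdd n i)) else 0) z = _
  split_ifs <;> rfl

lemma ampS_apply {n k : ℕ} (T : H →L[ℂ] Hn H d k) (x : Hn H d n) (β : Word d (n + k)) :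
    ampS H d n k T x β = T (x fun i => β (Fin.castAdd k i)) fun i => β (Fin.natAdd n i) := by
  classical
  have hsum : ampS H d n k T x β = ∑ α : Word d n, blockOut H d n k α (T (x α)) β := by
    rw [ampS, sum_apply, WithLp.ofLp_sum]
    exact Finset.sum_apply β Finset.univ _
  simp [hsum, blockOut_apply]

lemma mem_ker_ampS_iff {n k : ℕ} (T : H →L[ℂ] Hn H d k) (x : Hn H d n) :
    x ∈ LinearMap.ker (ampS H d n k T).toLinearMap ↔ ∀ α : Word d n, T (x α) = 0 := by
  refine ⟨fun hx α => ?_, fun hx => ?_⟩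
  · ext γ
    simpa [ampS_apply] using congr($(LinearMap.mem_ker.mp hx) (Fin.append α γ))
  · ext β
    simp [ampS_apply, hx]

lemma ampS_eq_of_forall_blockIn {n k : ℕ} (T : H →L[ℂ] Hn H d k) (y : Hn H d n)
    (x : Hn H d (n + k)) (h : ∀ α, T (y α) = blockIn H d n k α x) :
    ampS H d n k T y = x := by
  ext β
  rw [ampS_apply, h, blockIn_apply, Fin.append_castAdd_natAdd]

-- Only for targets `H_1`: for `H_k` the two sides would live in `H_{m+n+k}` and `H_{m+(n+k)}`,
-- which are not definitionally equal.
lemma ampS_one_comp_ampS {m n : ℕ} (U : H →L[ℂ] Hn H d 1) (T : H →L[ℂ] Hn H d n) :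
    (ampS H d (m + n) 1 U).comp (ampS H d m n T) =
      ampS H d m (n + 1) ((ampS H d n 1 U).comp T) := by
  ext x β
  simp only [ContinuousLinearMap.comp_apply, ampS_apply]
  have hassoc : ∀ i : Fin 1, Fin.natAdd (m + n) i = Fin.natAdd m (Fin.natAdd n i) :=
    fun i => Fin.ext (Nat.add_assoc m n i)
  simp only [hassoc]
  rfl

end Amplification

section Iterates

variable {H : Type} [NormedAddCommGroup H] [InnerProductSpace ℂ H] {d : ℕ}
  (S : H →L[ℂ] Hn H d 1)

lemma Siter_zero_apply (h : H) (γ : Word d 0) : Siter H S 0 h γ = h := by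
  change (if γ = (fun i : Fin 0 => i.elim0) then ContinuousLinearMap.id ℂ H else 0) h = h
  rw [if_pos (Subsingleton.elim _ _)]
  rfl

lemma Siter_one : Siter H S 1 = S := by
  ext h β
  change ampS H d 0 1 S (Siter H S 0 h) β = S h β
  rw [ampS_apply, Siter_zero_apply]
  have hβ : (fun i : Fin 1 => β (Fin.natAdd 0 i)) = β :=
    funext fun i => congrArg β (Fin.ext (by simp))
  rw [hβ]

lemma ampS_Siter_zero (m : ℕ) : ampS H d m 0 (Siter H S 0) = ContinuousLinearMap.id ℂ _ := by
  ext x β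
  rw [ampS_apply, Siter_zero_apply]
  rfl

lemma Siter_add (m n : ℕ) :
    Siter H S (m + n) = (ampS H d m n (Siter H S n)).comp (Siter H S m) := by
  induction n with
  | zero => rw [ampS_Siter_zero]; rfl
  | succ n ih =>
    change (ampS H d (m + n) 1 S).comp (Siter H S (m + n)) = _
    rw [ih, ← ContinuousLinearMap.comp_assoc, ampS_one_comp_ampS]
    rfl

lemma ker_ampS_Siter_succ (m n : ℕ) :
    LinearMap.ker (ampS H d m (n + 1) (Siter H S (n + 1))).toLinearMap =
      (LinearMap.ker (ampS H d (m + n) 1 S).toLinearMap).comap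
        (ampS H d m n (Siter H S n)).toLinearMap := by
  rw [← LinearMap.ker_comp, ← ContinuousLinearMap.toLinearMap_comp, ampS_one_comp_ampS]
  rfl

lemma map_Siter_ker_Siter_add (m n : ℕ) :
    (LinearMap.ker (Siter H S (m + n)).toLinearMap).map (Siter H S m).toLinearMap =
      LinearMap.range (Siter H S m).toLinearMap ⊓
        LinearMap.ker (ampS H d m n (Siter H S n)).toLinearMap := by
  rw [Siter_add, ContinuousLinearMap.toLinearMap_comp, LinearMap.ker_comp, Submodule.map_comap_eq]

lemma ker_ampS_Siter_eq_map_iff_le (m n : ℕ) :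
    LinearMap.ker (ampS H d m n (Siter H S n)).toLinearMap =
        (LinearMap.ker (Siter H S (m + n)).toLinearMap).map (Siter H S m).toLinearMap ↔
      LinearMap.ker (ampS H d m n (Siter H S n)).toLinearMap ≤
        LinearMap.range (Siter H S m).toLinearMap := by
  rw [map_Siter_ker_Siter_add, eq_comm, inf_eq_right]

end Iterates

section RangeConditions

variable {H : Type} [NormedAddCommGroup H] [InnerProductSpace ℂ H] {d : ℕ}
  (S : H →L[ℂ] Hn H d 1)

lemma ker_ampS_Siter_le_range_of_ker_ampS_le
    (h : ∀ m : ℕ, 1 ≤ m →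
      LinearMap.ker (ampS H d m 1 S).toLinearMap ≤ LinearMap.range (Siter H S m).toLinearMap)
    {m n : ℕ} (hm : 1 ≤ m) (hn : 1 ≤ n) :
    LinearMap.ker (ampS H d m n (Siter H S n)).toLinearMap ≤
      LinearMap.range (Siter H S m).toLinearMap := by
  induction n, hn using Nat.le_induction with
  | base => simpa only [Siter_one] using h m hm
  | succ n hn ih =>
    intro x hx
    rw [ker_ampS_Siter_succ, Submodule.mem_comap] at hx
    obtain ⟨g, hg⟩ := h (m + n) (by omega) hx
    have hxg : x - Siter H S m g ∈ LinearMap.ker (ampS H d m n (Siter H S n)).toLinearMap := by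
      rw [LinearMap.mem_ker, ContinuousLinearMap.coe_coe, map_sub,
        ← ContinuousLinearMap.comp_apply, ← Siter_add]
      exact sub_eq_zero.mpr hg.symm
    obtain ⟨g', hg'⟩ := ih hxg
    refine ⟨g + g', ?_⟩
    simp only [ContinuousLinearMap.coe_coe, map_add] at hg' ⊢
    rw [hg', add_sub_cancel]

lemma ker_ampS_Siter_le_range_of_ker_ampS_one_le
    (h : ∀ n : ℕ, 1 ≤ n →
      LinearMap.ker (ampS H d 1 n (Siter H S n)).toLinearMap ≤ LinearMap.range S.toLinearMap)
    {m n : ℕ} (hm : 1 ≤ m) (hn : 1 ≤ n) :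
    LinearMap.ker (ampS H d m n (Siter H S n)).toLinearMap ≤
      LinearMap.range (Siter H S m).toLinearMap := by
  induction m, hm using Nat.le_induction generalizing n with
  | base => simpa only [Siter_one] using h n hn
  | succ m hm ih =>
    intro x hx
    rw [mem_ker_ampS_iff] at hx
    have hblock : ∀ α : Word d m,
        blockIn H d m 1 α x ∈ LinearMap.ker (ampS H d 1 n (Siter H S n)).toLinearMap :=
      fun α => (mem_ker_ampS_iff _ _).mpr fun γ => hx (Fin.append α γ)
    choose y hy using fun α => h n hn (hblock α)
    have hy_ker : WithLp.toLp 2 y ∈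
        LinearMap.ker (ampS H d m (1 + n) (Siter H S (1 + n))).toLinearMap := by
      refine (mem_ker_ampS_iff _ _).mpr fun α => ?_
      rw [Siter_add, ContinuousLinearMap.comp_apply, Siter_one]
      exact (hy α).symm ▸ hblock α
    obtain ⟨g, hg⟩ := ih (by omega) hy_ker
    exact ⟨g, (congrArg (ampS H d m 1 S) hg).trans (ampS_eq_of_forall_blockIn S _ x hy)⟩

end RangeConditions

theorem stmt_4_general (H : Type) [NormedAddCommGroup H] [InnerProductSpace ℂ H]
    (d : ℕ) (S : H →L[ℂ] Hn H d 1) :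
    ((∀ m : ℕ, 1 ≤ m →
        LinearMap.ker (ampS H d m 1 S).toLinearMap ≤ LinearMap.range (Siter H S m).toLinearMap) ↔
      (∀ n : ℕ, 1 ≤ n →
        LinearMap.ker (ampS H d 1 n (Siter H S n)).toLinearMap ≤ LinearMap.range S.toLinearMap)) ∧
    ((∀ n : ℕ, 1 ≤ n →
        LinearMap.ker (ampS H d 1 n (Siter H S n)).toLinearMap ≤ LinearMap.range S.toLinearMap) ↔
      (∀ n m : ℕ, 1 ≤ n → 1 ≤ m →
        LinearMap.ker (ampS H d m n (Siter H S n)).toLinearMap ≤ LinearMap.range (Siter H S m).toLinearMap)) ∧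
    ((∀ n m : ℕ, 1 ≤ n → 1 ≤ m →
        LinearMap.ker (ampS H d m n (Siter H S n)).toLinearMap ≤ LinearMap.range (Siter H S m).toLinearMap) ↔
      (∀ n m : ℕ, 1 ≤ n → 1 ≤ m →
        LinearMap.ker (ampS H d m n (Siter H S n)).toLinearMap =
          Submodule.map (Siter H S m).toLinearMap (LinearMap.ker (Siter H S (m + n)).toLinearMap))) := by
  have h13 := ker_ampS_Siter_le_range_of_ker_ampS_le S
  have h23 := ker_ampS_Siter_le_range_of_ker_ampS_one_le S
  refine ⟨⟨fun h1 n hn => ?_, fun h2 m hm => ?_⟩,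
    ⟨fun h2 n m hn hm => h23 h2 hm hn, fun h3 n hn => ?_⟩,
    forall₄_congr fun n m _ _ => (ker_ampS_Siter_eq_map_iff_le S m n).symm⟩
  · simpa only [Siter_one] using h13 h1 le_rfl hn
  · simpa only [Siter_one] using h23 h2 hm le_rfl
  · simpa only [Siter_one] using h3 n 1 hn le_rfl

theorem stmt_4 (H : Type) [NormedAddCommGroup H] [InnerProductSpace ℂ H]
    (d : ℕ) (hd : 1 ≤ d) (V : Fin d → H →L[ℂ] H)
    (S : H →L[ℂ] Hn H d 1)
    (hgen1 : (Vtilde H V 1).comp (S.comp (Vtilde H V 1)) = Vtilde H V 1)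
    (hgen2 : S.comp ((Vtilde H V 1).comp S) = S) :
    ((∀ m : ℕ, 1 ≤ m →
        LinearMap.ker (ampS H d m 1 S).toLinearMap ≤ LinearMap.range (Siter H S m).toLinearMap) ↔
      (∀ n : ℕ, 1 ≤ n →
        LinearMap.ker (ampS H d 1 n (Siter H S n)).toLinearMap ≤ LinearMap.range S.toLinearMap)) ∧
    ((∀ n : ℕ, 1 ≤ n →
        LinearMap.ker (ampS H d 1 n (Siter H S n)).toLinearMap ≤ LinearMap.range S.toLinearMap) ↔
      (∀ n m : ℕ, 1 ≤ n → 1 ≤ m →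
        LinearMap.ker (ampS H d m n (Siter H S n)).toLinearMap ≤ LinearMap.range (Siter H S m).toLinearMap)) ∧
    ((∀ n m : ℕ, 1 ≤ n → 1 ≤ m →
        LinearMap.ker (ampS H d m n (Siter H S n)).toLinearMap ≤ LinearMap.range (Siter H S m).toLinearMap) ↔
      (∀ n m : ℕ, 1 ≤ n → 1 ≤ m →
        LinearMap.ker (ampS H d m n (Siter H S n)).toLinearMap =
          Submodule.map (Siter H S m).toLinearMap (LinearMap.ker (Siter H S (m + n)).toLinearMap))) :=
  stmt_4_general H d S
end

section
/- Assume Ṽ is bounded below, and assume that both the tuple (V_1,…,V_d) and its Cauchy dual tuple (V'_1,…,V'_d) have the generating wandering subspace property. Let A be a bounded operator on H with ‖A‖ ≤ 1 and A V_i = V_i A for every i. Then A*^n → 0 strongly on H (i.e. A*^n h → 0 for every h ∈ H) if and only if A*^n w → 0 for every w ∈ W := ker(Ṽ*) (equivalently, the compression P_W A|_W is a pure contraction; note W is A*-invariant and (P_W A|_W)*^n = A*^n|_W). -/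
open scoped InnerProductSpace

noncomputable section

variable (H : Type) [NormedAddCommGroup H] [InnerProductSpace ℂ H]

/-- The generating wandering subspace property for a tuple `V`. -/
def GWS {d : ℕ} (V : Fin d → H →L[ℂ] H) : Prop :=
  ∃ M : Submodule ℂ H, IsClosed (M : Set H) ∧
    (∀ n : ℕ, 1 ≤ n → ∀ ξ ∈ HnSub H d n M, ∀ w ∈ M, (inner ℂ w (Vtilde H V n ξ) : ℂ) = 0) ∧
    (⨆ n : ℕ, Submodule.map (Vtilde H V n).toLinearMap (HnSub H d n M)).topologicalClosure = ⊤

end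

/-!
Write `B = A*` and let `S` be the set of `x` with `Bⁿ x → 0`; it is a closed subspace because the
`Bⁿ` are contractions, and `W ⊆ S` by assumption. Since `B` commutes with every `V_j*` and
`Ṽ T Ṽ*` is the projection onto `ran Ṽ = W^⊥`, a vector `y` lies in `S` as soon as every `V_j* y`
does (here one uses that `‖Bⁿ y‖` decreases). As `V_j* V'_i = δ_ij`, induction on `n` gives
`Ṽ'_n (H_n(W)) ⊆ S`. Finally the wandering subspace of the Cauchy dual is orthogonal to
`ran Ṽ' = ran Ṽ`, so it lies in `W`; hence these spaces span a dense subspace and `S = H`.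
-/

open Filter Topology
open scoped InnerProduct

section StableSubmodule

variable {𝕜 E : Type*} [NontriviallyNormedField 𝕜] [NormedAddCommGroup E] [NormedSpace 𝕜 E]

def stableSubmodule (B : E →L[𝕜] E) : Submodule 𝕜 E where
  carrier := {x | Tendsto (fun n : ℕ => (B ^ n) x) atTop (𝓝 0)}
  add_mem' hx hy := by simpa only [Set.mem_ofPred_eq, map_add, add_zero] using hx.add hy
  zero_mem' := by simpa only [Set.mem_ofPred_eq, map_zero] using tendsto_const_nhds
  smul_mem' c _ hx := by simpa only [Set.mem_ofPred_eq, map_smul, smul_zero] using hx.const_smul c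

variable {B : E →L[𝕜] E}

theorem mem_stableSubmodule {x : E} :
    x ∈ stableSubmodule B ↔ Tendsto (fun n : ℕ => (B ^ n) x) atTop (𝓝 0) :=
  Iff.rfl

theorem norm_pow_apply_le (hB : ‖B‖ ≤ 1) (n : ℕ) (x : E) : ‖(B ^ n) x‖ ≤ ‖x‖ := by
  induction n generalizing x with
  | zero => simp
  | succ n ih =>
    rw [pow_succ, mul_apply_eq_comp]
    exact (ih (B x)).trans (B.le_of_opNorm_le hB x |>.trans_eq (one_mul _))

theorem isClosed_stableSubmodule (hB : ‖B‖ ≤ 1) : IsClosed (stableSubmodule B : Set E) := by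
  have hequi : Equicontinuous fun n : ℕ => ⇑(B ^ n) := by
    have hbound : ∃ C, ∀ (n : ℕ) (x : E), ‖(B ^ n) x‖ ≤ C * ‖x‖ :=
      ⟨1, fun n x => (norm_pow_apply_le hB n x).trans_eq (one_mul _).symm⟩
    exact ((NormedSpace.equicontinuous_TFAE fun n : ℕ => B ^ n).out 3 1).mp hbound
  exact hequi.isClosed_setOfPred_tendsto continuous_const

/-- As `‖B ^ n y‖` is nonincreasing, it suffices that `B ^ n y` comes arbitrarily close to
`stableSubmodule B`. -/
theorem mem_stableSubmodule_of_tendsto_sub (hB : ‖B‖ ≤ 1) {y : E} {r : ℕ → E}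
    (hr : Tendsto r atTop (𝓝 0)) (hmem : ∀ n, (B ^ n) y - r n ∈ stableSubmodule B) :
    y ∈ stableSubmodule B := by
  rw [mem_stableSubmodule, NormedAddGroup.tendsto_nhds_zero]
  intro ε hε
  obtain ⟨n, hn⟩ := (NormedAddGroup.tendsto_nhds_zero.mp hr (ε / 2) (half_pos hε)).exists
  obtain ⟨N, hN⟩ := eventually_atTop.mp
    (NormedAddGroup.tendsto_nhds_zero.mp (hmem n) (ε / 2) (half_pos hε))
  refine eventually_atTop.mpr ⟨N + n, fun k hk => ?_⟩
  obtain ⟨m, rfl⟩ : ∃ m, k = m + n := ⟨k - n, by omega⟩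
  calc ‖(B ^ (m + n)) y‖ = ‖(B ^ m) ((B ^ n) y - r n) + (B ^ m) (r n)‖ := by
        rw [← map_add, sub_add_cancel, pow_add, mul_apply_eq_comp]
    _ ≤ ‖(B ^ m) ((B ^ n) y - r n)‖ + ‖r n‖ :=
        (norm_add_le _ _).trans (add_le_add_right (norm_pow_apply_le hB m _) _)
    _ < ε / 2 + ε / 2 := add_lt_add (hN m (by omega)) hn
    _ = ε := add_halves ε

end StableSubmodule

section Words

variable {H : Type} [NormedAddCommGroup H] {d : ℕ}

def headBlock {n : ℕ} (i : Fin d) (η : Hn H d (n + 1)) : Hn H d n :=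
  WithLp.toLp 2 fun β => η (Fin.cons i β)

/-- `δ_i ⊗ ξ`. -/
def deltaTensor {n : ℕ} (i : Fin d) (ξ : Hn H d n) : Hn H d (n + 1) :=
  WithLp.toLp 2 fun α => if α 0 = i then ξ (Fin.tail α) else 0

theorem headBlock_deltaTensor {n : ℕ} (i j : Fin d) (ξ : Hn H d n) :
    headBlock j (deltaTensor i ξ) = if j = i then ξ else 0 := by
  refine PiLp.ext fun β => ?_
  split_ifs with h <;> simp [headBlock, deltaTensor, h]

variable [InnerProductSpace ℂ H]

theorem singleCLM_apply (n : ℕ) (α β : Word d n) (h : H) :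
    singleCLM H d n α h β = if β = α then h else 0 := by
  simp only [singleCLM, ContinuousLinearMap.comp_apply, ContinuousLinearEquiv.coe_coe,
    PiLp.continuousLinearEquiv_symm_apply, PiLp.toLp_apply, ContinuousLinearMap.pi_apply]
  split_ifs <;> simp

theorem sum_singleCLM_apply_self (n : ℕ) (ξ : Hn H d n) :
    ∑ α : Word d n, singleCLM H d n α (ξ α) = ξ := by
  refine PiLp.ext fun β => ?_
  simp [WithLp.ofLp_sum, Finset.sum_apply, singleCLM_apply]

theorem Vtilde_apply (V : Fin d → H →L[ℂ] H) (n : ℕ) (ξ : Hn H d n) :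
    Vtilde H V n ξ = ∑ α : Word d n, Vword H V n α (ξ α) := by
  simp [Vtilde, coord]

theorem Vtilde_zero_apply (V : Fin d → H →L[ℂ] H) (ξ : Hn H d 0) :
    Vtilde H V 0 ξ = ξ default := by
  rw [Vtilde_apply, Fintype.sum_unique]
  rfl

theorem Vtilde_one_apply (V : Fin d → H →L[ℂ] H) (ξ : Hn H d 1) :
    Vtilde H V 1 ξ = ∑ α : Word d 1, V (α 0) (ξ α) :=
  Vtilde_apply V 1 ξ

theorem Vtilde_one_singleCLM (V : Fin d → H →L[ℂ] H) (α : Word d 1) (y : H) :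
    Vtilde H V 1 (singleCLM H d 1 α y) = V (α 0) y := by
  simp [Vtilde_one_apply, singleCLM_apply, apply_ite]

theorem word_one_eq_const (α : Word d 1) : α = fun _ => α 0 :=
  funext fun m => by rw [Subsingleton.elim m 0]

theorem mem_HnSub {n : ℕ} {K : Submodule ℂ H} {η : Hn H d n} :
    η ∈ HnSub H d n K ↔ ∀ α, η α ∈ K := by
  simp [HnSub, coord]

theorem HnSub_mono (n : ℕ) {K L : Submodule ℂ H} (hKL : K ≤ L) :
    HnSub H d n K ≤ HnSub H d n L :=
  fun _ hη => mem_HnSub.mpr fun α => hKL (mem_HnSub.mp hη α)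

theorem Vtilde_succ_apply (V : Fin d → H →L[ℂ] H) (n : ℕ) (η : Hn H d (n + 1)) :
    Vtilde H V (n + 1) η = ∑ i : Fin d, V i (Vtilde H V n (headBlock i η)) := by
  rw [Vtilde_apply, ← (Fin.consEquiv fun _ : Fin (n + 1) => Fin d).sum_comp,
    Fintype.sum_prod_type]
  refine Finset.sum_congr rfl fun i _ => ?_
  rw [Vtilde_apply, map_sum]
  refine Finset.sum_congr rfl fun β _ => ?_
  simp [Vword, headBlock, Fin.consEquiv]

theorem Vtilde_deltaTensor (V : Fin d → H →L[ℂ] H) (n : ℕ) (i : Fin d) (ξ : Hn H d n) :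
    Vtilde H V (n + 1) (deltaTensor i ξ) = V i (Vtilde H V n ξ) := by
  simp [Vtilde_succ_apply, headBlock_deltaTensor, apply_ite]

theorem deltaTensor_mem_HnSub {n : ℕ} {K : Submodule ℂ H} (i : Fin d) {ξ : Hn H d n}
    (hξ : ξ ∈ HnSub H d n K) : deltaTensor i ξ ∈ HnSub H d (n + 1) K := by
  refine mem_HnSub.mpr fun α => ?_
  simp only [deltaTensor, PiLp.toLp_apply]
  split_ifs
  · exact mem_HnSub.mp hξ _
  · exact K.zero_mem

/-- The Cauchy dual tuple `V'_i = Ṽ (Ṽ*Ṽ)⁻¹ δ_i`, with `T` standing for `(Ṽ*Ṽ)⁻¹`. -/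
def cauchyDual (V : Fin d → H →L[ℂ] H) (T : Hn H d 1 →L[ℂ] Hn H d 1) : Fin d → H →L[ℂ] H :=
  fun i => (Vtilde H V 1).comp (T.comp (singleCLM H d 1 (fun _ : Fin 1 => i)))

theorem Vtilde_cauchyDual_one (V : Fin d → H →L[ℂ] H) (T : Hn H d 1 →L[ℂ] Hn H d 1) :
    Vtilde H (cauchyDual V T) 1 = (Vtilde H V 1).comp T := by
  ext ξ
  conv_rhs => rw [← sum_singleCLM_apply_self 1 ξ]
  rw [Vtilde_one_apply, ContinuousLinearMap.comp_apply, map_sum, map_sum]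
  refine Finset.sum_congr rfl fun α _ => ?_
  rw [word_one_eq_const α]
  rfl

end Words

section Adjoint

variable {H : Type} [NormedAddCommGroup H] [InnerProductSpace ℂ H] [CompleteSpace H] {d : ℕ}

theorem adjoint_Vtilde_one_apply (V : Fin d → H →L[ℂ] H) (x : H) (α : Word d 1) :
    ((Vtilde H V 1)†) x α = (V (α 0)†) x := by
  refine ext_inner_right ℂ fun y => ?_
  have hcoord : ⟪((Vtilde H V 1)†) x α, y⟫_ℂ = ⟪((Vtilde H V 1)†) x, singleCLM H d 1 α y⟫_ℂ := by
    simp [PiLp.inner_apply, singleCLM_apply, apply_ite]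
  rw [hcoord, ContinuousLinearMap.adjoint_inner_left, Vtilde_one_singleCLM,
    ContinuousLinearMap.adjoint_inner_left]

theorem adjoint_Vtilde_one_eq_sum (V : Fin d → H →L[ℂ] H) (x : H) :
    ((Vtilde H V 1)†) x = ∑ α : Word d 1, singleCLM H d 1 α ((V (α 0)†) x) := by
  conv_lhs => rw [← sum_singleCLM_apply_self 1 (((Vtilde H V 1)†) x)]
  simp only [adjoint_Vtilde_one_apply]

variable {V : Fin d → H →L[ℂ] H} {T : Hn H d 1 →L[ℂ] Hn H d 1}

theorem adjoint_apply_cauchyDual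
    (hT1 : ((Vtilde H V 1)†.comp (Vtilde H V 1)).comp T = ContinuousLinearMap.id ℂ (Hn H d 1))
    (i j : Fin d) (z : H) :
    (V j†) (cauchyDual V T i z) = if j = i then z else 0 := by
  have hleft : ∀ ξ, ((Vtilde H V 1)†) (Vtilde H V 1 (T ξ)) = ξ := fun ξ =>
    congrArg (· ξ) hT1
  rw [← adjoint_Vtilde_one_apply V _ (fun _ => j), cauchyDual, ContinuousLinearMap.comp_apply,
    ContinuousLinearMap.comp_apply, hleft, singleCLM_apply]
  simp [funext_iff]

theorem ker_adjoint_cauchyDual_le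
    (hT2 : T.comp ((Vtilde H V 1)†.comp (Vtilde H V 1)) = ContinuousLinearMap.id ℂ (Hn H d 1)) :
    LinearMap.ker ((Vtilde H (cauchyDual V T) 1)†).toLinearMap ≤
      LinearMap.ker ((Vtilde H V 1)†).toLinearMap := by
  intro m hm
  rw [Vtilde_cauchyDual_one, ContinuousLinearMap.adjoint_comp] at hm
  have hm' : (T†) (((Vtilde H V 1)†) m) = 0 := hm
  rw [LinearMap.mem_ker, ContinuousLinearMap.coe_coe]
  refine ext_inner_right ℂ fun ξ => ?_
  calc ⟪((Vtilde H V 1)†) m, ξ⟫_ℂ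
      = ⟪((Vtilde H V 1)†) m, T (((Vtilde H V 1)†) (Vtilde H V 1 ξ))⟫_ℂ := by
        rw [show T (((Vtilde H V 1)†) (Vtilde H V 1 ξ)) = ξ from congrArg (· ξ) hT2]
    _ = 0 := by rw [← ContinuousLinearMap.adjoint_inner_left, hm', inner_zero_left]
    _ = ⟪0, ξ⟫_ℂ := (inner_zero_left ξ).symm

end Adjoint

section Wandering

variable {H : Type} [NormedAddCommGroup H] [InnerProductSpace ℂ H] {d : ℕ}
  {U : Fin d → H →L[ℂ] H} {M : Submodule ℂ H}

/-- `U_i Ũ_n ξ = Ũ_{n+1} (δ_i ⊗ ξ)` is again orthogonal to `M`, and such vectors span a dense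
subspace of `ran U_i`. -/
theorem inner_apply_eq_zero_of_wandering
    (hwand : ∀ n : ℕ, 1 ≤ n → ∀ ξ ∈ HnSub H d n M, ∀ w ∈ M, ⟪w, Vtilde H U n ξ⟫_ℂ = 0)
    (hgen : (⨆ n : ℕ, Submodule.map (Vtilde H U n).toLinearMap (HnSub H d n M)).topologicalClosure
      = ⊤)
    {m : H} (hm : m ∈ M) (i : Fin d) (z : H) : ⟪m, U i z⟫_ℂ = 0 := by
  let f : H →L[ℂ] ℂ := (innerSL ℂ m).comp (U i)
  have hspan : (⨆ n : ℕ, Submodule.map (Vtilde H U n).toLinearMap (HnSub H d n M)) ≤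
      LinearMap.ker f.toLinearMap := by
    refine iSup_le fun n => Submodule.map_le_iff_le_comap.mpr fun ξ hξ => ?_
    have := hwand (n + 1) (Nat.le_add_left 1 n) _ (deltaTensor_mem_HnSub i hξ) m hm
    rwa [Vtilde_deltaTensor] at this
  have htop := Submodule.topologicalClosure_minimal _ hspan f.isClosed_ker
  rw [hgen] at htop
  exact htop Submodule.mem_top

variable [CompleteSpace H] in
theorem le_ker_adjoint_of_wandering
    (hwand : ∀ n : ℕ, 1 ≤ n → ∀ ξ ∈ HnSub H d n M, ∀ w ∈ M, ⟪w, Vtilde H U n ξ⟫_ℂ = 0)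
    (hgen : (⨆ n : ℕ, Submodule.map (Vtilde H U n).toLinearMap (HnSub H d n M)).topologicalClosure
      = ⊤) :
    M ≤ LinearMap.ker ((Vtilde H U 1)†).toLinearMap := by
  intro m hm
  rw [LinearMap.mem_ker, ContinuousLinearMap.coe_coe]
  refine ext_inner_right ℂ fun ξ => ?_
  rw [ContinuousLinearMap.adjoint_inner_left, Vtilde_one_apply, inner_sum, inner_zero_left]
  exact Finset.sum_eq_zero fun α _ => inner_apply_eq_zero_of_wandering hwand hgen hm _ _

end Wandering

section Purity

variable {H : Type} [NormedAddCommGroup H] [InnerProductSpace ℂ H] [CompleteSpace H] {d : ℕ}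
  {V : Fin d → H →L[ℂ] H} {T : Hn H d 1 →L[ℂ] Hn H d 1} {A : H →L[ℂ] H}

theorem adjoint_apply_adjoint_pow (hcomm : ∀ i : Fin d, A.comp (V i) = (V i).comp A)
    (j : Fin d) (n : ℕ) (x : H) : (V j†) ((A† ^ n) x) = (A† ^ n) ((V j†) x) := by
  have hstar : Commute (star A) (star (V j)) := Commute.star_star (hcomm j)
  rw [ContinuousLinearMap.star_eq_adjoint, ContinuousLinearMap.star_eq_adjoint] at hstar
  exact congrArg (· x) (hstar.pow_left n).symm.eq

/-- Write `A*ⁿ y = P_W A*ⁿ y + Ṽ T Ṽ* A*ⁿ y`; the second term tends to `0` because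
`Ṽ* A*ⁿ y = (A*ⁿ V_j* y)_j`. -/
theorem mem_stableSubmodule_of_adjoint_mem
    (hT1 : ((Vtilde H V 1)†.comp (Vtilde H V 1)).comp T = ContinuousLinearMap.id ℂ (Hn H d 1))
    (hA : ‖A‖ ≤ 1) (hcomm : ∀ i : Fin d, A.comp (V i) = (V i).comp A)
    (hW : LinearMap.ker ((Vtilde H V 1)†).toLinearMap ≤ stableSubmodule (A†))
    {y : H} (hy : ∀ j, (V j†) y ∈ stableSubmodule (A†)) : y ∈ stableSubmodule (A†) := by
  set Vt := Vtilde H V 1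
  have hB : ‖A†‖ ≤ 1 := by rwa [LinearIsometryEquiv.norm_map]
  have hcoeff : Tendsto (fun n => (Vt†) ((A† ^ n) y)) atTop (𝓝 0) := by
    simp only [Vt, adjoint_Vtilde_one_eq_sum, adjoint_apply_adjoint_pow hcomm]
    rw [show (0 : Hn H d 1) = ∑ α : Word d 1, singleCLM H d 1 α 0 by simp]
    exact tendsto_finsetSum _ fun α _ => ((singleCLM H d 1 α).continuous.tendsto 0).comp (hy _)
  refine mem_stableSubmodule_of_tendsto_sub hB (r := fun n => Vt (T ((Vt†) ((A† ^ n) y)))) ?_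
    fun n => hW ?_
  · have hr := ((Vt.comp T).continuous.tendsto 0).comp hcoeff
    rwa [map_zero] at hr
  · rw [LinearMap.mem_ker, ContinuousLinearMap.coe_coe, map_sub, sub_eq_zero]
    exact (congrArg (· ((Vt†) ((A† ^ n) y))) hT1).symm

theorem Vtilde_cauchyDual_mem_stableSubmodule
    (hT1 : ((Vtilde H V 1)†.comp (Vtilde H V 1)).comp T = ContinuousLinearMap.id ℂ (Hn H d 1))
    (hA : ‖A‖ ≤ 1) (hcomm : ∀ i : Fin d, A.comp (V i) = (V i).comp A)
    (hW : LinearMap.ker ((Vtilde H V 1)†).toLinearMap ≤ stableSubmodule (A†)) (n : ℕ) :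
    ∀ η ∈ HnSub H d n (LinearMap.ker ((Vtilde H V 1)†).toLinearMap),
      Vtilde H (cauchyDual V T) n η ∈ stableSubmodule (A†) := by
  induction n with
  | zero =>
    intro η hη
    rw [Vtilde_zero_apply]
    exact hW (mem_HnSub.mp hη _)
  | succ n ih =>
    intro η hη
    refine mem_stableSubmodule_of_adjoint_mem hT1 hA hcomm hW fun j => ?_
    have hblock : (V j†) (Vtilde H (cauchyDual V T) (n + 1) η) =
        Vtilde H (cauchyDual V T) n (headBlock j η) := by
      simp [Vtilde_succ_apply, adjoint_apply_cauchyDual hT1]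
    rw [hblock]
    exact ih _ (mem_HnSub.mpr fun β => mem_HnSub.mp hη _)

end Purity

theorem stmt_19_general (H : Type) [NormedAddCommGroup H] [InnerProductSpace ℂ H] [CompleteSpace H]
    (d : ℕ) (V : Fin d → H →L[ℂ] H)
    (T : Hn H d 1 →L[ℂ] Hn H d 1)
    (hT1 : ((ContinuousLinearMap.adjoint (Vtilde H V 1)).comp (Vtilde H V 1)).comp T =
      ContinuousLinearMap.id ℂ (Hn H d 1))
    (hT2 : T.comp ((ContinuousLinearMap.adjoint (Vtilde H V 1)).comp (Vtilde H V 1)) =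
      ContinuousLinearMap.id ℂ (Hn H d 1))
    (hGWS' : GWS H (fun i : Fin d =>
      (Vtilde H V 1).comp (T.comp (singleCLM H d 1 (fun _ : Fin 1 => i)))))
    (A : H →L[ℂ] H) (hA : ‖A‖ ≤ 1)
    (hcomm : ∀ i : Fin d, A.comp (V i) = (V i).comp A) :
    (∀ h : H, Filter.Tendsto (fun n : ℕ => ((ContinuousLinearMap.adjoint A) ^ n) h)
        Filter.atTop (nhds 0)) ↔
      (∀ w ∈ LinearMap.ker (ContinuousLinearMap.adjoint (Vtilde H V 1)).toLinearMap,
        Filter.Tendsto (fun n : ℕ => ((ContinuousLinearMap.adjoint A) ^ n) w)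
          Filter.atTop (nhds 0)) := by
  refine ⟨fun hpure w _ => hpure w, fun hW h => ?_⟩
  obtain ⟨M, -, hwand, hgen⟩ : GWS H (cauchyDual V T) := hGWS'
  have hMW : M ≤ LinearMap.ker ((Vtilde H V 1)†).toLinearMap :=
    (le_ker_adjoint_of_wandering hwand hgen).trans (ker_adjoint_cauchyDual_le hT2)
  have hspan : (⨆ n : ℕ, Submodule.map (Vtilde H (cauchyDual V T) n).toLinearMap (HnSub H d n M))
      ≤ stableSubmodule (A†) :=
    iSup_le fun n => Submodule.map_le_iff_le_comap.mpr fun η hη =>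
      Vtilde_cauchyDual_mem_stableSubmodule hT1 hA hcomm hW n η (HnSub_mono n hMW hη)
  have hB : ‖A†‖ ≤ 1 := by rwa [LinearIsometryEquiv.norm_map]
  have htop := Submodule.topologicalClosure_minimal _ hspan (isClosed_stableSubmodule hB)
  rw [hgen] at htop
  exact htop Submodule.mem_top

theorem stmt_19 (H : Type) [NormedAddCommGroup H] [InnerProductSpace ℂ H] [CompleteSpace H]
    (d : ℕ) (hd : 1 ≤ d) (V : Fin d → H →L[ℂ] H)
    (c : ℝ) (hc : 0 < c) (hbb : ∀ ξ : Hn H d 1, c * ‖ξ‖ ≤ ‖Vtilde H V 1 ξ‖)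
    (T : Hn H d 1 →L[ℂ] Hn H d 1)
    (hT1 : ((ContinuousLinearMap.adjoint (Vtilde H V 1)).comp (Vtilde H V 1)).comp T =
      ContinuousLinearMap.id ℂ (Hn H d 1))
    (hT2 : T.comp ((ContinuousLinearMap.adjoint (Vtilde H V 1)).comp (Vtilde H V 1)) =
      ContinuousLinearMap.id ℂ (Hn H d 1))
    (hGWS : GWS H V)
    (hGWS' : GWS H (fun i : Fin d =>
      (Vtilde H V 1).comp (T.comp (singleCLM H d 1 (fun _ : Fin 1 => i)))))
    (A : H →L[ℂ] H) (hA : ‖A‖ ≤ 1)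
    (hcomm : ∀ i : Fin d, A.comp (V i) = (V i).comp A) :
    (∀ h : H, Filter.Tendsto (fun n : ℕ => ((ContinuousLinearMap.adjoint A) ^ n) h)
        Filter.atTop (nhds 0)) ↔
      (∀ w ∈ LinearMap.ker (ContinuousLinearMap.adjoint (Vtilde H V 1)).toLinearMap,
        Filter.Tendsto (fun n : ℕ => ((ContinuousLinearMap.adjoint A) ^ n) w)
          Filter.atTop (nhds 0)) :=
  stmt_19_general H d V T hT1 hT2 hGWS' A hA hcomm
end
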